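/- Let f and g be symmetric functions of degree at most n. If f[Ξ_μ] = g[Ξ_μ] for every partition μ with |μ| ≤ n, then f = g. -/

import Mathlib

open scoped BigOperators

/-- Same eigenvalue collection, as a multiset. -/
noncomputable def xiM (μ : Multiset ℕ) : Multiset ℂ :=
  μ.bind fun r => (Multiset.range r).map fun k =>
    Complex.exp (2 * Real.pi * Complex.I * k / r)

/-- Evaluation of the power sum `p_n` on a multiset of values. -/
noncomputable def pEvalM (n : ℕ) (S : Multiset ℂ) : ℂ := (S.map (· ^ n)).sum

/-- The ring of symmetric functions, modeled as polynomials in the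
(algebraically independent) power sums `p_1, p_2, …`:  variable `k : ℕ+` stands for `p_k`. -/
abbrev SymF := MvPolynomial ℕ+ ℂ

/-- Evaluation of a symmetric function at the eigenvalues `Ξ_μ` of a permutation
matrix of cycle type `μ` (each `p_k` goes to `p_k[Ξ_μ]`). -/
noncomputable def evalXi (μ : Multiset ℕ) (f : SymF) : ℂ :=
  MvPolynomial.eval (fun k : ℕ+ => pEvalM (k : ℕ) (xiM μ)) f

/-!
Since the `k`-th powers of the `r`-th roots of unity sum to `r` if `r ∣ k` and to `0` otherwise,
`p_k[Ξ_μ] = ∑_{d ∣ k} d m_d`, where `m_d` is the multiplicity of `d` in `μ`. Hence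
`F[Ξ_μ] = G(m)` for `F = f - g` and the polynomial `G` obtained from `F` by the substitution
`p_k ↦ ∑_{d ∣ k} d X_d`. Giving `X_d` weight `d`, this substitution does not raise weighted degree,
so `G` has weighted degree `≤ n` and vanishes at every `m : ℕ+ →₀ ℕ` with `∑ d m_d ≤ n`. Such a
polynomial is zero: if its leading coefficient in one variable `X_0` has degree `j`, that
coefficient vanishes on the simplex of budget `n - j w_0`, since a univariate polynomial of
degree `j` vanishing at `0, …, j` is zero; induct on the number of variables. Finally, the
substitution is triangular with invertible diagonal (Möbius inversion), so `G = 0` forces `F = 0`.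
-/

open MvPolynomial

namespace MvPolynomial

variable {σ τ R : Type*} [CommSemiring R]

theorem eval_bind₁ (x : σ → R) (φ : τ → MvPolynomial σ R) (p : MvPolynomial τ R) :
    eval x (bind₁ φ p) = eval (fun i => eval x (φ i)) p :=
  eval₂Hom_bind₁ _ _ _ _

section WeightedTotalDegree

variable (w : σ → ℕ)

theorem weightedTotalDegree_smul_le (c : R) (p : MvPolynomial σ R) :
    weightedTotalDegree w (c • p) ≤ weightedTotalDegree w p :=
  Finset.sup_mono support_smul

theorem weightedTotalDegree_X_le (i : σ) :
    weightedTotalDegree w (X i : MvPolynomial σ R) ≤ w i :=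
  Finset.sup_le fun m hm => by
    simp [Finset.mem_singleton.mp (support_monomial_subset hm), Finsupp.weight_single]

theorem weightedTotalDegree_mul_le (p q : MvPolynomial σ R) :
    weightedTotalDegree w (p * q) ≤ weightedTotalDegree w p + weightedTotalDegree w q := by
  classical
  refine Finset.sup_le fun m hm => ?_
  obtain ⟨a, ha, b, hb, rfl⟩ := Finset.mem_add.mp (support_mul p q hm)
  rw [map_add]
  exact add_le_add (le_weightedTotalDegree w ha) (le_weightedTotalDegree w hb)

theorem weightedTotalDegree_prod_le {ι : Type*} (s : Finset ι) (f : ι → MvPolynomial σ R) :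
    weightedTotalDegree w (∏ i ∈ s, f i) ≤ ∑ i ∈ s, weightedTotalDegree w (f i) := by
  classical
  induction s using Finset.induction_on with
  | empty =>
    refine Finset.sup_le fun m hm => ?_
    rw [Finset.prod_empty, one_def] at hm
    simp [Finset.mem_singleton.mp (support_monomial_subset hm)]
  | insert i s hi ih =>
    rw [Finset.prod_insert hi, Finset.sum_insert hi]
    exact (weightedTotalDegree_mul_le w _ _).trans (by gcongr)

theorem weightedTotalDegree_pow_le (p : MvPolynomial σ R) (k : ℕ) :
    weightedTotalDegree w (p ^ k) ≤ k * weightedTotalDegree w p := by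
  simpa using weightedTotalDegree_prod_le w (Finset.range k) fun _ => p

theorem weightedTotalDegree_sum_le {ι : Type*} (s : Finset ι) (f : ι → MvPolynomial σ R) :
    weightedTotalDegree w (∑ i ∈ s, f i) ≤ s.sup fun i => weightedTotalDegree w (f i) := by
  classical
  refine Finset.sup_le fun m hm => ?_
  obtain ⟨i, hi, hm⟩ := Finset.mem_biUnion.mp (support_sum hm)
  exact (le_weightedTotalDegree w hm).trans
    (Finset.le_sup (f := fun i => weightedTotalDegree w (f i)) hi)

theorem weightedTotalDegree_bind₁_le (v : τ → ℕ) (φ : τ → MvPolynomial σ R)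
    (hφ : ∀ i, weightedTotalDegree w (φ i) ≤ v i) (p : MvPolynomial τ R) :
    weightedTotalDegree w (bind₁ φ p) ≤ weightedTotalDegree v p := by
  conv_lhs => rw [p.as_sum, map_sum]
  refine (weightedTotalDegree_sum_le w _ _).trans (Finset.sup_le fun m hm => ?_)
  rw [bind₁_monomial, ← smul_eq_C_mul]
  calc weightedTotalDegree w (coeff m p • ∏ i ∈ m.support, φ i ^ m i)
      ≤ ∑ i ∈ m.support, weightedTotalDegree w (φ i ^ m i) :=
        (weightedTotalDegree_smul_le w _ _).trans (weightedTotalDegree_prod_le w _ _)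
    _ ≤ ∑ i ∈ m.support, m i * v i := Finset.sum_le_sum fun i _ =>
        (weightedTotalDegree_pow_le w _ _).trans (Nat.mul_le_mul_left _ (hφ i))
    _ = Finsupp.weight v m := by simp [Finsupp.weight_apply, Finsupp.sum]
    _ ≤ weightedTotalDegree v p := le_weightedTotalDegree v hm

end WeightedTotalDegree

end MvPolynomial

theorem Finsupp.weight_cons {s : ℕ} (w : Fin (s + 1) → ℕ) (t : ℕ) (m : Fin s →₀ ℕ) :
    weight w (Finsupp.cons t m) = t * w 0 + weight (w ∘ Fin.succ) m := by
  simp [weight_eq_sum, Fin.sum_univ_succ]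

theorem Finsupp.weight_mapDomain {σ τ : Type*} (w : τ → ℕ) (ψ : σ → τ) (a : σ →₀ ℕ) :
    weight w (a.mapDomain ψ) = weight (w ∘ ψ) a := by
  simp only [weight_apply]
  exact sum_mapDomain_index (fun _ => zero_smul ℕ _) fun _ _ _ => add_smul _ _ _

theorem Polynomial.eq_zero_of_natDegree_le_of_eval_natCast_eq_zero {K : Type*} [CommRing K]
    [IsDomain K] [CharZero K] {p : Polynomial K} {j : ℕ} (hp : p.natDegree ≤ j)
    (h : ∀ t ≤ j, p.eval (t : K) = 0) : p = 0 :=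
  eq_zero_of_natDegree_lt_card_of_eval_eq_zero p (f := fun t : Fin (j + 1) => ((t : ℕ) : K))
    (fun _ _ hst => Fin.ext (Nat.cast_injective hst)) (fun t => h t (Nat.lt_succ_iff.mp t.2))
    (by simpa using Nat.lt_succ_of_le hp)

namespace MvPolynomial

variable {K : Type*} [CommRing K] [IsDomain K] [CharZero K]

theorem eq_zero_of_eval_natCast_eq_zero_of_weightedTotalDegree_le_fin {s : ℕ} (w : Fin s → ℕ)
    (hw : ∀ i, 0 < w i) {n : ℕ} {P : MvPolynomial (Fin s) K}
    (hP : weightedTotalDegree w P ≤ n)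
    (hzero : ∀ a : Fin s →₀ ℕ, Finsupp.weight w a ≤ n → eval (fun i => (a i : K)) P = 0) :
    P = 0 := by
  induction s generalizing n with
  | zero =>
    rw [eq_C_of_isEmpty P] at hzero ⊢
    simpa using hzero 0 (by simp)
  | succ s ih =>
    set q := finSuccEquiv K s P
    suffices q = 0 from (map_eq_zero_iff _ (finSuccEquiv K s).injective).mp this
    by_contra hq
    set j := q.natDegree
    have hcoeff (m) (hm : m ∈ (q.coeff j).support) :
        Finsupp.weight (w ∘ Fin.succ) m + j * w 0 ≤ n := by
      rw [mem_support_iff, finSuccEquiv_coeff_coeff, ← mem_support_iff] at hm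
      have := le_weightedTotalDegree w hm
      rw [Finsupp.weight_cons] at this
      omega
    obtain ⟨m, hm⟩ := Finset.nonempty_of_ne_empty
      (mt support_eq_empty.mp (Polynomial.leadingCoeff_ne_zero.mpr hq))
    have hj : j * w 0 ≤ n := le_add_self.trans (hcoeff m hm)
    refine Polynomial.leadingCoeff_ne_zero.mpr hq <| ih (w ∘ Fin.succ) (fun i => hw _)
      (Finset.sup_le fun m hm => Nat.le_sub_of_add_le (hcoeff m hm)) fun a ha => ?_
    have hQ : q.map (eval fun i => (a i : K)) = 0 := by
      refine Polynomial.eq_zero_of_natDegree_le_of_eval_natCast_eq_zero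
        Polynomial.natDegree_map_le fun t ht => ?_
      have hpt : (Fin.cons (t : K) fun i => (a i : K)) = fun i => (Finsupp.cons t a i : K) := by
        funext i
        cases i using Fin.cases <;> simp
      rw [← eval_eq_eval_mv_eval', hpt]
      refine hzero _ ?_
      rw [Finsupp.weight_cons]
      have : t * w 0 ≤ j * w 0 := Nat.mul_le_mul_right _ ht
      omega
    exact (Polynomial.coeff_map _ j).symm.trans (by rw [hQ, Polynomial.coeff_zero])

theorem eq_zero_of_eval_natCast_eq_zero_of_weightedTotalDegree_le {σ : Type*} (w : σ → ℕ)
    (hw : ∀ i, 0 < w i) {n : ℕ} {P : MvPolynomial σ K}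
    (hP : weightedTotalDegree w P ≤ n)
    (hzero : ∀ a : σ →₀ ℕ, Finsupp.weight w a ≤ n → eval (fun i => (a i : K)) P = 0) :
    P = 0 := by
  obtain ⟨s, ψ, hψ, P, rfl⟩ := exists_fin_rename P
  rw [weightedTotalDegree_rename_of_injective hψ] at hP
  rw [eq_zero_of_eval_natCast_eq_zero_of_weightedTotalDegree_le_fin (w ∘ ψ) (fun i => hw _) hP
    fun a ha => ?_, map_zero]
  have := hzero (a.mapDomain ψ) (by rwa [Finsupp.weight_mapDomain])
  simpa [eval_rename, Function.comp_def, Finsupp.mapDomain_apply hψ] using this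

end MvPolynomial

theorem sum_range_exp_pow (r k : ℕ) :
    ∑ j ∈ Finset.range r, Complex.exp (2 * Real.pi * Complex.I * j / r) ^ k =
      if r ∣ k then (r : ℂ) else 0 := by
  rcases r.eq_zero_or_pos with rfl | hr
  · simp
  set ζ := Complex.exp (2 * Real.pi * Complex.I / r)
  have hζ : IsPrimitiveRoot ζ r := Complex.isPrimitiveRoot_exp r hr.ne'
  have hterm (j : ℕ) : Complex.exp (2 * Real.pi * Complex.I * j / r) ^ k = (ζ ^ k) ^ j := by
    have hj : Complex.exp (2 * Real.pi * Complex.I * j / r) = ζ ^ j := by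
      rw [← Complex.exp_nat_mul]
      ring_nf
    rw [hj, pow_right_comm]
  simp_rw [hterm]
  split_ifs with hdvd
  · simp [(hζ.pow_eq_one_iff_dvd k).mpr hdvd]
  · have hne : ζ ^ k ≠ 1 := mt (hζ.pow_eq_one_iff_dvd k).mp hdvd
    have hgeom := mul_geom_sum (ζ ^ k) r
    rw [pow_right_comm, hζ.pow_eq_one, one_pow, sub_self] at hgeom
    exact (mul_eq_zero.mp hgeom).resolve_left (sub_ne_zero.mpr hne)

theorem pEvalM_xiM (k : ℕ) (μ : Multiset ℕ) :
    pEvalM k (xiM μ) = (μ.map fun r => if r ∣ k then (r : ℂ) else 0).sum := by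
  rw [pEvalM, xiM, Multiset.map_bind, Multiset.sum_bind]
  congr 1
  refine Multiset.map_congr rfl fun r _ => ?_
  rw [← sum_range_exp_pow, Multiset.map_map]
  simp only [Multiset.pure_def, Multiset.bind_def, Multiset.bind_singleton, Function.comp_apply,
    Multiset.map_map, Finset.sum_eq_multiset_sum, Finset.range_val]

/-- `p_k[Ξ_μ]` as a polynomial in the multiplicities `X_d` of the parts `d` of `μ`. -/
noncomputable def powerSumInMultiplicities (k : ℕ+) : MvPolynomial ℕ+ ℂ :=
  ∑ d ∈ (k : ℕ).divisors, (d : ℂ) • X (Nat.toPNat' d)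

theorem weightedTotalDegree_powerSumInMultiplicities_le (k : ℕ+) :
    weightedTotalDegree (fun d : ℕ+ => (d : ℕ)) (powerSumInMultiplicities k) ≤ k := by
  refine (weightedTotalDegree_sum_le _ _ _).trans (Finset.sup_le fun d hd => ?_)
  refine (weightedTotalDegree_smul_le _ _ _).trans ((weightedTotalDegree_X_le _ _).trans ?_)
  rw [Nat.toPNat'_coe, if_pos (Nat.pos_of_mem_divisors hd)]
  exact Nat.divisor_le hd

theorem eval_powerSumInMultiplicities (a : ℕ+ →₀ ℕ) (k : ℕ+) :
    eval (fun d => (a d : ℂ)) (powerSumInMultiplicities k) =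
      pEvalM k (xiM (a.toMultiset.map (↑))) := by
  rw [pEvalM_xiM, Multiset.map_map]
  induction a using Finsupp.induction_linear with
  | zero => simp [powerSumInMultiplicities]
  | add a b ha hb =>
    simp only [powerSumInMultiplicities, map_sum, smul_eval, eval_X, Finsupp.coe_add,
      Pi.add_apply, Nat.cast_add, mul_add, Finset.sum_add_distrib] at ha hb ⊢
    rw [ha, hb, Finsupp.toMultiset_add, Multiset.map_add, Multiset.sum_add]
  | single r c =>
    have hr (d : ℕ) (hd : d ∈ (k : ℕ).divisors) : r = d.toPNat' ↔ (r : ℕ) = d := by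
      rw [← PNat.coe_inj, Nat.toPNat'_coe, if_pos (Nat.pos_of_mem_divisors hd)]
    calc eval (fun d => ((Finsupp.single r c : ℕ+ →₀ ℕ) d : ℂ)) (powerSumInMultiplicities k)
        = ∑ d ∈ (k : ℕ).divisors, if (r : ℕ) = d then (d : ℂ) * c else 0 := by
          rw [powerSumInMultiplicities, map_sum]
          refine Finset.sum_congr rfl fun d hd => ?_
          by_cases h : (r : ℕ) = d <;> simp [Finsupp.single_apply, hr d hd, h]
      _ = _ := by
          rw [Finset.sum_ite_eq]
          simp [Nat.mem_divisors, Multiset.map_nsmul, Multiset.sum_nsmul, mul_comm]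

theorem exists_eval_powerSumInMultiplicities_eq (v : ℕ+ → ℂ) :
    ∃ x : ℕ+ → ℂ, ∀ k, eval x (powerSumInMultiplicities k) = v k := by
  set c : ℕ → ℂ := fun n =>
    ∑ d ∈ n.divisorsAntidiagonal, ArithmeticFunction.moebius d.1 • v d.2.toPNat'
  have hc := (ArithmeticFunction.sum_eq_iff_sum_smul_moebius_eq
    (f := c) (g := fun n => v n.toPNat')).mpr fun _ _ => rfl
  refine ⟨fun r => c r / r, fun k => ?_⟩
  calc eval _ (powerSumInMultiplicities k) = ∑ d ∈ (k : ℕ).divisors, c d := by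
        rw [powerSumInMultiplicities, map_sum]
        refine Finset.sum_congr rfl fun d hd => ?_
        have hd0 := Nat.pos_of_mem_divisors hd
        simp only [smul_eval, eval_X, Nat.toPNat'_coe, hd0, ↓reduceIte]
        exact mul_div_cancel₀ _ (Nat.cast_ne_zero.mpr hd0.ne')
    _ = v k := by simpa using hc k k.pos

theorem evalXi_map_coe_toMultiset (a : ℕ+ →₀ ℕ) (f : SymF) :
    evalXi (a.toMultiset.map (↑)) f =
      eval (fun d => (a d : ℂ)) (bind₁ powerSumInMultiplicities f) := by
  simp only [evalXi, eval_bind₁, eval_powerSumInMultiplicities]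

theorem sum_map_coe_toMultiset (a : ℕ+ →₀ ℕ) :
    (a.toMultiset.map (↑)).sum = Finsupp.weight (fun d : ℕ+ => (d : ℕ)) a := by
  simp only [Finsupp.toMultiset_map, Finsupp.sum_toMultiset, Finsupp.weight_apply, smul_eq_mul]
  exact Finsupp.sum_mapDomain_index (fun _ => zero_mul _) fun _ _ _ => add_mul _ _ _

/-- Two symmetric functions (polynomials in the power sums `p_k`, `k : ℕ+`) of degree at
most `n` which agree at the eigenvalues `Ξ_μ` of permutation matrices for all partitions
`μ` with `|μ| ≤ n` are equal. -/
theorem symF_eq_of_eval_small (n : ℕ) (f g : SymF)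
    (hf : ∀ m ∈ f.support, (m.sum fun k e => (k : ℕ) * e) ≤ n)
    (hg : ∀ m ∈ g.support, (m.sum fun k e => (k : ℕ) * e) ≤ n)
    (h : ∀ μ : Multiset ℕ, (∀ i ∈ μ, 0 < i) → μ.sum ≤ n → evalXi μ f = evalXi μ g) :
    f = g := by
  classical
  have hdeg : weightedTotalDegree (fun d : ℕ+ => (d : ℕ)) (f - g) ≤ n := by
    refine Finset.sup_le fun m hm => ?_
    have hweight : Finsupp.weight (fun d : ℕ+ => (d : ℕ)) m = m.sum fun k e => (k : ℕ) * e := by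
      simp [Finsupp.weight_apply, mul_comm]
    rw [hweight]
    rcases Finset.mem_union.mp (support_sub _ f g hm) with hm | hm
    exacts [hf m hm, hg m hm]
  have hG : bind₁ powerSumInMultiplicities (f - g) = 0 := by
    refine eq_zero_of_eval_natCast_eq_zero_of_weightedTotalDegree_le _ PNat.pos
      ((weightedTotalDegree_bind₁_le _ _ _ weightedTotalDegree_powerSumInMultiplicities_le
        _).trans hdeg) fun a ha => ?_
    rw [← evalXi_map_coe_toMultiset, evalXi, map_sub, sub_eq_zero]
    refine h _ (fun i hi => ?_) (by rwa [sum_map_coe_toMultiset])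
    obtain ⟨r, -, rfl⟩ := Multiset.mem_map.mp hi
    exact r.pos
  refine sub_eq_zero.mp (MvPolynomial.funext fun v => ?_)
  obtain ⟨x, hx⟩ := exists_eval_powerSumInMultiplicities_eq v
  rw [map_zero, ← funext hx, ← eval_bind₁, hG, map_zero]
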